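/- Let r₁, r₂, r₃ ∈ ℝ³, s₁, s₂, s₃ ∈ ℝ, and R, R̂ ∈ SO(3). Define vᵢ = Rᵀ rᵢ and v̂ᵢ = R̂ᵀ rᵢ for i = 1,2,3, set M_r = Σᵢ sᵢ rᵢ rᵢᵀ and R̃ = R R̂ᵀ. Then vex(P_a(M_r R̃)) = ½ Σᵢ sᵢ R̂ (vᵢ × v̂ᵢ). -/
import Mathlib


open Matrix

/-- `vex(𝒫ₐ(A)) = ½ [A₃₂ − A₂₃, A₁₃ − A₃₁, A₂₁ − A₁₂]ᵀ`. -/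
noncomputable def vexPa (A : Matrix (Fin 3) (Fin 3) ℝ) : Fin 3 → ℝ :=
  ![(A 2 1 - A 1 2) / 2, (A 0 2 - A 2 0) / 2, (A 1 0 - A 0 1) / 2]

lemma transpose_cross (A : Matrix (Fin 3) (Fin 3) ℝ) (x y : Fin 3 → ℝ) :
    Aᵀ.mulVec (crossProduct (A.mulVec x) (A.mulVec y)) = A.det • crossProduct x y := by
  funext i
  fin_cases i <;>
    simp [crossProduct, mulVec, dotProduct, Fin.sum_univ_three, Matrix.det_fin_three,
      transpose_apply] <;> ring

lemma so3_cross (A : Matrix (Fin 3) (Fin 3) ℝ) (hA : Aᵀ * A = 1) (hd : A.det = 1)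
    (x y : Fin 3 → ℝ) :
    A.mulVec (crossProduct x y) = crossProduct (A.mulVec x) (A.mulVec y) := by
  have h2 : A * Aᵀ = 1 := mul_eq_one_comm.mp hA
  have := transpose_cross A x y
  rw [hd, one_smul] at this
  calc A.mulVec (crossProduct x y)
      = A.mulVec (Aᵀ.mulVec (crossProduct (A.mulVec x) (A.mulVec y))) := by rw [this]
    _ = (A * Aᵀ).mulVec (crossProduct (A.mulVec x) (A.mulVec y)) := by rw [mulVec_mulVec]
    _ = _ := by rw [h2, one_mulVec]

lemma vecMulVec_mul' (a b : Fin 3 → ℝ) (C : Matrix (Fin 3) (Fin 3) ℝ) :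
    vecMulVec a b * C = vecMulVec a (Cᵀ.mulVec b) := by
  ext i j
  simp [vecMulVec_apply, mul_apply, mulVec, dotProduct, transpose_apply, Finset.mul_sum]
  exact Finset.sum_congr rfl (fun k _ => by ring)

lemma vexPa_sum (s : Fin 3 → ℝ) (a b : Fin 3 → Fin 3 → ℝ) :
    vexPa (∑ i, s i • vecMulVec (a i) (b i)) =
      (2 : ℝ)⁻¹ • ∑ i, s i • crossProduct (b i) (a i) := by
  funext k
  fin_cases k <;>
    simp [vexPa, crossProduct, vecMulVec_apply, Fin.sum_univ_three, Matrix.sum_apply,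
      Pi.smul_apply, smul_eq_mul] <;> ring

/-- with `vᵢ = Rᵀ rᵢ`, `v̂ᵢ = R̂ᵀ rᵢ`, `M_r = Σᵢ sᵢ rᵢ rᵢᵀ` and
`R̃ = R R̂ᵀ`, one has `vex(𝒫ₐ(M_r R̃)) = ½ Σᵢ sᵢ R̂ (vᵢ × v̂ᵢ)`. -/
theorem vexPa_Mr_Rtilde (r : Fin 3 → Fin 3 → ℝ) (s : Fin 3 → ℝ)
    (R Rhat : Matrix (Fin 3) (Fin 3) ℝ)
    (hR : Rᵀ * R = 1) (hRdet : R.det = 1)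
    (hRhat : Rhatᵀ * Rhat = 1) (hRhatdet : Rhat.det = 1)
    (v vhat : Fin 3 → Fin 3 → ℝ)
    (hv : ∀ i, v i = Rᵀ.mulVec (r i)) (hvhat : ∀ i, vhat i = Rhatᵀ.mulVec (r i))
    (Mr : Matrix (Fin 3) (Fin 3) ℝ)
    (hMr : Mr = ∑ i, s i • vecMulVec (r i) (r i))
    (Rtilde : Matrix (Fin 3) (Fin 3) ℝ) (hRtilde : Rtilde = R * Rhatᵀ) :
    vexPa (Mr * Rtilde) =
      (2 : ℝ)⁻¹ • ∑ i, s i • Rhat.mulVec (crossProduct (v i) (vhat i)) := by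
  have hRhatO : Rhat * Rhatᵀ = 1 := mul_eq_one_comm.mp hRhat
  have hr : ∀ i, Rhat.mulVec (vhat i) = r i := by
    intro i
    rw [hvhat, mulVec_mulVec, hRhatO, one_mulVec]
  have hRtb : ∀ i, (R * Rhatᵀ)ᵀ.mulVec (r i) = Rhat.mulVec (v i) := by
    intro i
    rw [transpose_mul, transpose_transpose, ← mulVec_mulVec, ← hv]
  have hprod : Mr * Rtilde = ∑ i, s i • vecMulVec (Rhat.mulVec (vhat i)) (Rhat.mulVec (v i)) := by
    rw [hMr, hRtilde, Finset.sum_mul]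
    refine Finset.sum_congr rfl (fun i _ => ?_)
    rw [smul_mul_assoc, vecMulVec_mul', hRtb, hr]
  rw [hprod, vexPa_sum]
  congr 1
  refine Finset.sum_congr rfl (fun i _ => ?_)
  rw [so3_cross Rhat hRhat hRhatdet]
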